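/- If A is a tropical product of lossy phone call matrices C_{i_1,j_1}(b_1) ⊙ ⋯ ⊙ C_{i_s,j_s}(b_s) and r is an index minimizing b_r among those r with i_r, j_r lying on opposite sides of a partition [n] = K ⊔ L, then a_{i_r, j_r} = a_{j_r, i_r} = b_r. -/

import Mathlib

open scoped ENNReal

/-- Tropical (min-plus) matrix multiplication over [0,∞]. -/
noncomputable def tropMul {n : ℕ} (A B : Matrix (Fin n) (Fin n) ℝ≥0∞) :
    Matrix (Fin n) (Fin n) ℝ≥0∞ :=
  fun i j => Finset.univ.inf fun k => A i k + B k j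

/-- The tropical identity matrix: 0 on the diagonal, ∞ elsewhere. -/
noncomputable def tropId {n : ℕ} : Matrix (Fin n) (Fin n) ℝ≥0∞ :=
  fun i j => if i = j then 0 else ⊤

/-- The lossy phone call matrix C_{kl}(a): zero diagonal, value `a` at
positions (k,l) and (l,k), and ∞ elsewhere. -/
noncomputable def call {n : ℕ} (k l : Fin n) (a : ℝ≥0∞) : Matrix (Fin n) (Fin n) ℝ≥0∞ :=
  fun i j => if i = j then 0 else if (i = k ∧ j = l) ∨ (i = l ∧ j = k) then a else ⊤

/-- The tropical product of a list of lossy phone call matrices. -/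
noncomputable def prodC {n : ℕ} (l : List (Fin n × Fin n × ℝ≥0∞)) : Matrix (Fin n) (Fin n) ℝ≥0∞ :=
  (l.map fun t => call t.1 t.2.1 t.2.2).foldr tropMul tropId

/-!
Every call has zero diagonal, so a tropical product of calls is entrywise at most each of its
factors; this gives `a_{i_r j_r} ≤ b_r`. Conversely, an entry of the product is a minimum over
paths, and a path between the two sides of the partition must use a crossing entry of some
factor; so a lower bound for the crossing entries of all factors passes to the product.
-/

section

variable {n : ℕ}

def CrossingLowerBound (K : Finset (Fin n)) (b : ℝ≥0∞) (A : Matrix (Fin n) (Fin n) ℝ≥0∞) :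
    Prop :=
  ∀ i j, (i ∈ K ↔ j ∉ K) → b ≤ A i j

lemma prodC_cons (x : Fin n × Fin n × ℝ≥0∞) (l : List (Fin n × Fin n × ℝ≥0∞)) :
    prodC (x :: l) = tropMul (call x.1 x.2.1 x.2.2) (prodC l) := rfl

lemma call_apply_self (k m : Fin n) (a : ℝ≥0∞) (i : Fin n) : call k m a i i = 0 := by
  simp [call]

lemma call_apply_le (k m : Fin n) (a : ℝ≥0∞) : call k m a k m ≤ a := by
  unfold call
  split_ifs <;> simp_all

lemma call_apply_le_swap (k m : Fin n) (a : ℝ≥0∞) : call k m a m k ≤ a := by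
  unfold call
  split_ifs <;> simp_all

lemma tropMul_apply_le_left {A B : Matrix (Fin n) (Fin n) ℝ≥0∞} (i j : Fin n)
    (hB : B j j = 0) : tropMul A B i j ≤ A i j :=
  calc tropMul A B i j ≤ A i j + B j j := Finset.inf_le (Finset.mem_univ j)
    _ = A i j := by rw [hB, add_zero]

lemma tropMul_apply_le_right {A B : Matrix (Fin n) (Fin n) ℝ≥0∞} (i j : Fin n)
    (hA : A i i = 0) : tropMul A B i j ≤ B i j :=
  calc tropMul A B i j ≤ A i i + B i j := Finset.inf_le (Finset.mem_univ i)
    _ = B i j := by rw [hA, zero_add]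

lemma prodC_apply_self (l : List (Fin n × Fin n × ℝ≥0∞)) (i : Fin n) : prodC l i i = 0 := by
  induction l with
  | nil => simp [prodC, tropId]
  | cons x l ih =>
    exact nonpos_iff_eq_zero.mp ((tropMul_apply_le_left i i ih).trans (call_apply_self ..).le)

lemma prodC_apply_le_call_of_mem {l : List (Fin n × Fin n × ℝ≥0∞)} {t : Fin n × Fin n × ℝ≥0∞}
    (ht : t ∈ l) (i j : Fin n) : prodC l i j ≤ call t.1 t.2.1 t.2.2 i j := by
  induction l with
  | nil => simp at ht
  | cons x l ih =>
    rw [prodC_cons]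
    rcases List.mem_cons.mp ht with rfl | ht
    · exact tropMul_apply_le_left i j (prodC_apply_self l j)
    · exact (tropMul_apply_le_right i j (call_apply_self ..)).trans (ih ht)

lemma crossingLowerBound_tropId (K : Finset (Fin n)) (b : ℝ≥0∞) :
    CrossingLowerBound K b tropId := by
  intro i j hij
  have hne : i ≠ j := by rintro rfl; tauto
  simp [tropId, hne]

lemma crossingLowerBound_call {K : Finset (Fin n)} {b : ℝ≥0∞} (k m : Fin n) {a : ℝ≥0∞}
    (hb : (k ∈ K ↔ m ∉ K) → b ≤ a) : CrossingLowerBound K b (call k m a) := by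
  intro i j hij
  have hne : i ≠ j := by rintro rfl; tauto
  unfold call
  rw [if_neg hne]
  split_ifs with h
  · rcases h with ⟨rfl, rfl⟩ | ⟨rfl, rfl⟩ <;> exact hb (by tauto)
  · exact le_top

lemma CrossingLowerBound.tropMul {K : Finset (Fin n)} {b : ℝ≥0∞}
    {A B : Matrix (Fin n) (Fin n) ℝ≥0∞} (hA : CrossingLowerBound K b A)
    (hB : CrossingLowerBound K b B) : CrossingLowerBound K b (tropMul A B) := by
  intro i j hij
  refine Finset.le_inf fun k _ => ?_
  by_cases hkj : k ∈ K ↔ j ∉ K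
  · exact (hB k j hkj).trans le_add_self
  · exact (hA i k (by tauto)).trans le_self_add

lemma crossingLowerBound_prodC (K : Finset (Fin n)) {b : ℝ≥0∞}
    {l : List (Fin n × Fin n × ℝ≥0∞)}
    (hl : ∀ t ∈ l, (t.1 ∈ K ↔ t.2.1 ∉ K) → b ≤ t.2.2) : CrossingLowerBound K b (prodC l) := by
  induction l with
  | nil => exact crossingLowerBound_tropId K b
  | cons x l ih =>
    rw [prodC_cons]
    exact (crossingLowerBound_call _ _ (hl x List.mem_cons_self)).tropMul
      (ih fun t ht => hl t (List.mem_cons_of_mem x ht))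

end

theorem min_crossing_call_general {n : ℕ}
    (l : List (Fin n × Fin n × ℝ≥0∞))
    (K : Finset (Fin n)) (t : Fin n × Fin n × ℝ≥0∞) (ht : t ∈ l)
    (hcross : t.1 ∈ K ↔ t.2.1 ∉ K)
    (hmin : ∀ t' ∈ l, (t'.1 ∈ K ↔ t'.2.1 ∉ K) → t.2.2 ≤ t'.2.2) :
    prodC l t.1 t.2.1 = t.2.2 ∧ prodC l t.2.1 t.1 = t.2.2 := by
  have hlow := crossingLowerBound_prodC K hmin
  refine ⟨le_antisymm ?_ (hlow _ _ hcross), le_antisymm ?_ (hlow _ _ (by tauto))⟩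
  · exact (prodC_apply_le_call_of_mem ht _ _).trans (call_apply_le ..)
  · exact (prodC_apply_le_call_of_mem ht _ _).trans (call_apply_le_swap ..)

theorem min_crossing_call {n : ℕ}
    (l : List (Fin n × Fin n × ℝ≥0∞)) (hd : ∀ t ∈ l, t.1 ≠ t.2.1)
    (K : Finset (Fin n)) (t : Fin n × Fin n × ℝ≥0∞) (ht : t ∈ l)
    (hcross : t.1 ∈ K ↔ t.2.1 ∉ K)
    (hmin : ∀ t' ∈ l, (t'.1 ∈ K ↔ t'.2.1 ∉ K) → t.2.2 ≤ t'.2.2) :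
    prodC l t.1 t.2.1 = t.2.2 ∧ prodC l t.2.1 t.1 = t.2.2 :=
  min_crossing_call_general l K t ht hcross hmin
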